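/- Let C be a differential structure on a set M and N ⊇ M. For f ∈ C let f₀: N → ℝ be defined by f₀|_M = f and f₀ ≡ 0 on N \ M. Then the differential structure D generated on N by {f₀ : f ∈ C} is an extension of C from M to N, i.e. D_M = C, where D_M is the subspace differential structure on M induced by D. -/

import Mathlib

/-- The initial (weakest) topology on `M` making all functions in `C` continuous. -/
def tau {M : Type*} (C : Set (M → ℝ)) : TopologicalSpace M :=
  ⨅ f ∈ C, TopologicalSpace.induced f inferInstance

/-- Local `C`-functions on `M`: functions locally agreeing with elements of `C`. -/
def localFuncs {M : Type*} (C : Set (M → ℝ)) : Set (M → ℝ) :=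
  {f | ∀ p : M, ∃ V : Set M, (tau C).IsOpen V ∧ p ∈ V ∧ ∃ α ∈ C, ∀ x ∈ V, f x = α x}

/-- The closure of `C` under superposition with smooth functions. -/
def sc {M : Type*} (C : Set (M → ℝ)) : Set (M → ℝ) :=
  {f | ∃ (n : ℕ) (ω : (Fin n → ℝ) → ℝ) (α : Fin n → (M → ℝ)),
    ContDiff ℝ (⊤ : ℕ∞) ω ∧ (∀ i, α i ∈ C) ∧ f = fun p => ω (fun i => α i p)}

/-- A Sikorski differential structure. -/
def IsDiffStructure {M : Type*} (C : Set (M → ℝ)) : Prop :=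
  localFuncs C = C ∧ sc C = C

/-- The differential structure generated by a family `F`. -/
def genStructure {M : Type*} (F : Set (M → ℝ)) : Set (M → ℝ) :=
  localFuncs (sc F)

/-- Smoothness of a map between differential spaces. -/
def IsSmoothMap {M N : Type*} (C : Set (M → ℝ)) (D : Set (N → ℝ)) (φ : M → N) : Prop :=
  ∀ β ∈ D, (β ∘ φ) ∈ C

/-- The subspace differential structure on a subset `A ⊆ N`,
generated by restrictions of elements of `D`. -/
def subStructure {N : Type*} (D : Set (N → ℝ)) (A : Set N) : Set (↥A → ℝ) :=
  genStructure {g | ∃ β ∈ D, g = fun a => β a.1}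

lemma subset_localFuncs {M : Type*} {C : Set (M → ℝ)} : C ⊆ localFuncs C := fun f hf p =>
  ⟨Set.univ, (tau C).isOpen_univ, trivial, f, hf, fun _ _ => rfl⟩

lemma subset_sc {M : Type*} {F : Set (M → ℝ)} : F ⊆ sc F := fun f hf =>
  ⟨1, fun v => v 0, fun _ => f,
    (ContinuousLinearMap.proj (R := ℝ) (φ := fun _ : Fin 1 => ℝ) 0).contDiff, fun _ => hf, rfl⟩

lemma sc_mono {M : Type*} {A B : Set (M → ℝ)} (h : A ⊆ B) : sc A ⊆ sc B := by
  rintro f ⟨n, ω, α, hω, hα, rfl⟩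
  exact ⟨n, ω, α, hω, fun i => h (hα i), rfl⟩

lemma tau_anti {M : Type*} {A B : Set (M → ℝ)} (h : A ⊆ B) : tau B ≤ tau A :=
  le_iInf₂ fun f hf => iInf₂_le f (h hf)

lemma localFuncs_mono {M : Type*} {A B : Set (M → ℝ)} (h : A ⊆ B) :
    localFuncs A ⊆ localFuncs B := by
  intro f hf p
  obtain ⟨V, hV, hpV, α, hα, heq⟩ := hf p
  exact ⟨V, TopologicalSpace.le_def.mp (tau_anti h) V hV, hpV, α, h hα, heq⟩

lemma restrict_sc {N : Type*} {M : Set N} [DecidablePred (· ∈ M)] {C : Set (↥M → ℝ)}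
    (hC : sc C = C) {γ : N → ℝ}
    (hγ : γ ∈ sc {g : N → ℝ | ∃ f ∈ C, g = fun x => if h : x ∈ M then f ⟨x, h⟩ else 0}) :
    (fun a : ↥M => γ a.1) ∈ C := by
  obtain ⟨n, ω, α, hω, hα, rfl⟩ := hγ
  rw [← hC]
  choose f hf hfe using hα
  refine ⟨n, ω, fun i => f i, hω, hf, ?_⟩
  funext a
  show ω (fun i => α i a.1) = ω (fun i => f i a)
  congr 1
  funext i
  rw [hfe i]
  exact dif_pos a.2

lemma val_cont {N : Type*} {M : Set N} {C : Set (↥M → ℝ)} {F : Set (N → ℝ)}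
    (hF : ∀ g ∈ F, (fun a : ↥M => g a.1) ∈ C) :
    @Continuous _ _ (tau C) (tau F) (Subtype.val : ↥M → N) := by
  rw [tau, tau, continuous_iInf_rng]
  intro g
  rw [continuous_iInf_rng]
  intro hg
  rw [continuous_induced_rng]
  exact continuous_iff_le_induced.mpr (iInf₂_le _ (hF g hg))

lemma restrict_gen {N : Type*} {M : Set N} [DecidablePred (· ∈ M)] {C : Set (↥M → ℝ)}
    (hC : IsDiffStructure C) {β : N → ℝ}
    (hβ : β ∈ genStructure
      {g : N → ℝ | ∃ f ∈ C, g = fun x => if h : x ∈ M then f ⟨x, h⟩ else 0}) :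
    (fun a : ↥M => β a.1) ∈ C := by
  rw [← hC.1]
  intro p
  obtain ⟨V, hV, hpV, γ, hγ, heq⟩ := hβ p.1
  have hcont := val_cont (C := C) (fun g hg => restrict_sc hC.2 hg)
  refine ⟨Subtype.val ⁻¹' V, continuous_def.mp hcont V hV, hpV,
    fun a => γ a.1, restrict_sc hC.2 hγ, fun x hx => heq x.1 hx⟩

/-- The structure generated on N by the extensions-by-zero of the functions of C is an
extension of C from M to N, i.e. its localization to M is exactly C. -/
theorem stmt19 {N : Type*} (M : Set N) [DecidablePred (· ∈ M)] (hM : M.Nonempty) (C : Set (↥M → ℝ))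
    (hC : IsDiffStructure C) :
    subStructure
      (genStructure {g : N → ℝ | ∃ f ∈ C, g = fun x => if h : x ∈ M then f ⟨x, h⟩ else 0})
      M = C := by
  set F₀ : Set (N → ℝ) := {g : N → ℝ | ∃ f ∈ C, g = fun x => if h : x ∈ M then f ⟨x, h⟩ else 0}
    with hF₀
  set R : Set (↥M → ℝ) := {g | ∃ β ∈ genStructure F₀, g = fun a => β a.1} with hR
  have hRC : R ⊆ C := by
    rintro g ⟨β, hβ, rfl⟩
    exact restrict_gen hC hβ
  apply le_antisymm
  · calc localFuncs (sc R) ⊆ localFuncs (sc C) := localFuncs_mono (sc_mono hRC)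
      _ = localFuncs C := by rw [hC.2]
      _ = C := hC.1
  · intro f hf
    have hfR : f ∈ R := by
      refine ⟨fun x => if h : x ∈ M then f ⟨x, h⟩ else 0, ?_, ?_⟩
      · exact subset_localFuncs (subset_sc ⟨f, hf, rfl⟩)
      · funext a
        show f a = if h : a.1 ∈ M then f ⟨a.1, h⟩ else 0
        rw [dif_pos a.2]
    exact subset_localFuncs (subset_sc hfR)
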